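/- For n points in general position in ℝ^d (n ≥ d+2), the number of Radon partitions (unordered partitions {A, Aᶜ} whose convex hulls intersect) equals ∑_{i=d+1}^{n-1} C(n-1, i). -/

import Mathlib

/-!
Lift the points to `yᵢ = (xᵢ, 1)`; general position makes any `d + 1` of the `yᵢ` linearly
independent. A partition `{A, Aᶜ}` is Radon exactly when some nonzero linear dependency `c` of the
`yᵢ` (an affine dependency of the `xᵢ`) is `≥ 0` on `A` and `≤ 0` on `Aᶜ`. The dependencies form a
space `K` of dimension `k = n - d - 1` on which the `n` coordinate functionals are again in general
position (Gale duality), so we are counting the weak sign sets of `n` generic functionals on a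
`k`-dimensional space. Splitting by the sign of the last functional, the sets realised with both
signs are those of the restriction to its kernel, and those realised with some sign are those of the
first `n - 1` functionals; this gives `N(n, k) = N(n - 1, k) + N(n - 1, k - 1)` and hence
`N(n, k) = 2 ∑_{i<k} C(n-1, i)`. Each Radon partition is counted twice, and
`∑_{i<k} C(n-1, i) = ∑_{i=d+1}^{n-1} C(n-1, i)` by the symmetry of binomial coefficients.
-/

open Module Function Submodule

variable {𝕜 : Type*} [Field 𝕜]

section GeneralPosition

variable {ι M V : Type*} [AddCommGroup M] [Module 𝕜 M] [AddCommGroup V] [Module 𝕜 V]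

variable (𝕜) in
def LinearGeneralPosition (v : ι → M) : Prop :=
  ∀ s : Finset ι, s.card ≤ finrank 𝕜 M → LinearIndepOn 𝕜 v s

namespace LinearGeneralPosition

variable {v : ι → M} (hv : LinearGeneralPosition 𝕜 v)
include hv

theorem comp_injective {κ : Type*} {f : κ → ι} (hf : Injective f) :
    LinearGeneralPosition 𝕜 (v ∘ f) := fun s hs ↦ by
  have := hv (s.map ⟨f, hf⟩) (by simpa using hs)
  rw [Finset.coe_map] at this
  exact this.comp_of_image hf.injOn

theorem ne_zero (hM : 0 < finrank 𝕜 M) (i : ι) : v i ≠ 0 :=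
  (hv {i} ((Finset.card_singleton i).trans_le hM)).ne_zero (by simp)

theorem span_image_eq_top [FiniteDimensional 𝕜 M] {t : Finset ι} (ht : finrank 𝕜 M ≤ t.card) :
    span 𝕜 (v '' t) = ⊤ := by
  obtain ⟨s, hst, hs⟩ := Finset.exists_subset_card_eq ht
  refine eq_top_mono (span_mono (Set.image_mono hst)) ?_
  rw [Set.image_eq_range]
  exact (hv s hs.le).span_eq_top_of_card_eq_finrank' (by simpa using hs)

theorem span_eq_top [Fintype ι] [FiniteDimensional 𝕜 M] (hcard : finrank 𝕜 M ≤ Fintype.card ι) :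
    span 𝕜 (Set.range v) = ⊤ := by
  simpa using hv.span_image_eq_top (t := Finset.univ) hcard

end LinearGeneralPosition

theorem LinearGeneralPosition.injective_pi [Fintype ι] [FiniteDimensional 𝕜 V] {ℓ : ι → Dual 𝕜 V}
    (hℓ : LinearGeneralPosition 𝕜 ℓ) (hcard : finrank 𝕜 V ≤ Fintype.card ι) :
    Injective (LinearMap.pi ℓ) := by
  rw [← LinearMap.ker_eq_bot, LinearMap.ker_eq_bot']
  intro v hv
  have hspan : span 𝕜 (Set.range ℓ) ≤ LinearMap.ker (Dual.eval 𝕜 V v) :=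
    span_le.mpr (Set.range_subset_iff.mpr fun i ↦ congr_fun hv i)
  rw [hℓ.span_eq_top (by rwa [Subspace.dual_finrank_eq])] at hspan
  exact (forall_dual_apply_eq_zero_iff 𝕜 v).mp fun φ ↦ hspan mem_top

theorem LinearGeneralPosition.dualRestrict_ker [FiniteDimensional 𝕜 V] {ℓ : ι → Dual 𝕜 V}
    (hℓ : LinearGeneralPosition 𝕜 ℓ) (hV : 0 < finrank 𝕜 V) {κ : Type*} {f : κ → ι}
    (hf : Injective f) {j : ι} (hj : j ∉ Set.range f) :
    LinearGeneralPosition 𝕜 (fun k ↦ (LinearMap.ker (ℓ j)).dualRestrict (ℓ (f k))) := by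
  classical
  intro s hs
  have hℓj : ℓ j ≠ 0 := hℓ.ne_zero (by rwa [Subspace.dual_finrank_eq]) j
  have hjs : j ∉ f '' s := fun h ↦ hj (Set.image_subset_range f s h)
  have hcard : (insert j (s.map ⟨f, hf⟩)).card ≤ finrank 𝕜 (Dual 𝕜 V) := by
    rw [Finset.card_insert_of_notMem (by simpa using hjs), Finset.card_map,
      Subspace.dual_finrank_eq, ← (ℓ j).finrank_ker_add_one_of_ne_zero hℓj]
    rw [Subspace.dual_finrank_eq] at hs
    omega
  have hind := hℓ _ hcard
  rw [Finset.coe_insert, Finset.coe_map, Embedding.coeFn_mk, linearIndepOn_insert hjs] at hind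
  have hann : (LinearMap.ker (ℓ j)).dualAnnihilator ≤ 𝕜 ∙ ℓ j := fun φ hφ ↦ by
    simpa using mem_span_of_iInf_ker_le_ker (L := fun _ : Unit ↦ ℓ j)
      (by rw [iInf_const]; exact fun w hw ↦ (mem_dualAnnihilator φ).mp hφ w hw)
  have hdisj : Disjoint (span 𝕜 (Set.range fun i : f '' s ↦ ℓ i))
      (LinearMap.ker (LinearMap.ker (ℓ j)).dualRestrict) := by
    rw [← Set.image_eq_range, dualRestrict_ker_eq_dualAnnihilator]
    exact (disjoint_span_singleton_of_notMem hind.2).mono_right hann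
  exact LinearIndepOn.comp_of_image (v := fun i ↦ (LinearMap.ker (ℓ j)).dualRestrict (ℓ i))
    (hind.1.map hdisj) hf.injOn

end GeneralPosition

section Gale

variable {ι U E : Type*} [Fintype ι] [AddCommGroup U] [Module 𝕜 U] [FiniteDimensional 𝕜 U]

namespace LinearGeneralPosition

variable {y : ι → U} (hy : LinearGeneralPosition 𝕜 y) (hcard : finrank 𝕜 U ≤ Fintype.card ι)
include hy hcard

theorem finrank_ker_linearCombination_add :
    finrank 𝕜 (LinearMap.ker (Fintype.linearCombination 𝕜 y)) + finrank 𝕜 U = Fintype.card ι := by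
  have hrange : LinearMap.range (Fintype.linearCombination 𝕜 y) = ⊤ := by
    rw [Fintype.range_linearCombination, hy.span_eq_top hcard]
  have := (Fintype.linearCombination 𝕜 y).finrank_range_add_finrank_ker
  rw [hrange, finrank_top, finrank_fintype_fun_eq_card] at this
  omega

theorem dualRestrict_ker_linearCombination :
    LinearGeneralPosition 𝕜 fun i ↦
      (LinearMap.ker (Fintype.linearCombination 𝕜 y)).dualRestrict (LinearMap.proj i) := by
  classical
  intro s hs
  have hdim := hy.finrank_ker_linearCombination_add hcard
  rw [Subspace.dual_finrank_eq] at hs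
  rw [linearIndepOn_finset_iff]
  intro g hg i hi
  set T := Fintype.linearCombination 𝕜 y
  set φ : Dual 𝕜 (ι → 𝕜) := ∑ j ∈ s, g j • LinearMap.proj j
  have hφ_single (j : ι) : φ (Pi.single j 1) = if j ∈ s then g j else 0 := by
    simp [φ, Pi.single_apply]
  have hφT : φ ∈ LinearMap.range T.dualMap := by
    rw [LinearMap.range_dualMap_eq_dualAnnihilator_ker, ← dualRestrict_ker_eq_dualAnnihilator,
      LinearMap.mem_ker]
    simpa [φ, map_sum] using hg
  obtain ⟨ψ, hψ⟩ := hφT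
  have hψ_apply (j : ι) : ψ (y j) = φ (Pi.single j 1) := by
    rw [← hψ, LinearMap.dualMap_apply, Fintype.linearCombination_apply_single, one_smul]
  -- the points outside `s` are at least `finrank U` many, so they span `U` and `ψ` vanishes
  have hψ0 : ψ = 0 := by
    have hspan := hy.span_image_eq_top (t := sᶜ) (by rw [Finset.card_compl]; omega)
    have hle : span 𝕜 (y '' ↑sᶜ) ≤ LinearMap.ker ψ := span_le.mpr <| by
      rintro - ⟨j, hj, rfl⟩
      simp [hψ_apply, hφ_single, Finset.mem_compl.mp hj]
    rw [hspan, top_le_iff, LinearMap.ker_eq_top] at hle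
    exact hle
  simpa [hψ0, hφ_single, hi, eq_comm] using hψ_apply i

end LinearGeneralPosition

variable [AddCommGroup E] [Module 𝕜 E]

theorem AffineIndependent.linearIndependent_prod_one {κ : Type*} {x : κ → E}
    (hx : AffineIndependent 𝕜 x) : LinearIndependent 𝕜 (fun i ↦ (x i, (1 : 𝕜))) := by
  rw [linearIndependent_iff']
  intro s g hg
  have hg' := Prod.ext_iff.mp hg
  simp only [Prod.fst_sum, Prod.snd_sum, Prod.smul_mk, smul_eq_mul, mul_one] at hg'
  exact hx.eq_zero_of_sum_eq_zero hg'.2 hg'.1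

theorem linearGeneralPosition_prod_one [FiniteDimensional 𝕜 E] {x : ι → E}
    (hcard : finrank 𝕜 E + 1 ≤ Fintype.card ι)
    (hx : ∀ s : Finset ι, s.card = finrank 𝕜 E + 1 → AffineIndependent 𝕜 (fun i : s ↦ x i)) :
    LinearGeneralPosition 𝕜 (fun i ↦ (x i, (1 : 𝕜))) := by
  intro s hs
  rw [finrank_prod, finrank_self] at hs
  obtain ⟨t, hst, -, ht⟩ := Finset.exists_subsuperset_card_eq (Finset.subset_univ s) hs hcard
  exact LinearIndepOn.mono (s := t) (hx t ht).linearIndependent_prod_one (mod_cast hst)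

end Gale

theorem Set.ncard_eq_add_of_fin_succ {n : ℕ} (S : Set (Set (Fin (n + 1)))) :
    S.ncard = {B | insert (Fin.last n) (Fin.castSucc '' B) ∈ S}.ncard +
      {B | Fin.castSucc '' B ∈ S}.ncard := by
  set f : Set (Fin n) → Set (Fin (n + 1)) := fun B ↦ insert (Fin.last n) (Fin.castSucc '' B)
  set g : Set (Fin n) → Set (Fin (n + 1)) := fun B ↦ Fin.castSucc '' B
  have hg : Injective g := Set.image_injective.mpr (Fin.castSucc_injective n)
  have hf : Injective f := fun B B' h ↦ hg <| by
    simpa [f, g, Fin.castSucc_ne_last] using congr_arg (· \ {Fin.last n}) h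
  have hf_preimage {A : Set (Fin (n + 1))} (h : Fin.last n ∈ A) : f (Fin.castSucc ⁻¹' A) = A := by
    ext j
    induction j using Fin.lastCases <;>
      simp [f, h, Fin.castSucc_ne_last, (Fin.castSucc_injective n).mem_set_image]
  have hg_preimage {A : Set (Fin (n + 1))} (h : Fin.last n ∉ A) : g (Fin.castSucc ⁻¹' A) = A := by
    ext j
    induction j using Fin.lastCases <;>
      simp [g, h, Fin.castSucc_ne_last, (Fin.castSucc_injective n).mem_set_image]
  have hS : S = f '' {B | f B ∈ S} ∪ g '' {B | g B ∈ S} := by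
    ext A
    refine ⟨fun hA ↦ ?_, ?_⟩
    · by_cases h : Fin.last n ∈ A
      · exact Or.inl ⟨_, by rwa [Set.mem_ofPred_eq, hf_preimage h], hf_preimage h⟩
      · exact Or.inr ⟨_, by rwa [Set.mem_ofPred_eq, hg_preimage h], hg_preimage h⟩
    · rintro (⟨B, hB, rfl⟩ | ⟨B, hB, rfl⟩) <;> exact hB
  have hdisj : Disjoint (f '' {B | f B ∈ S}) (g '' {B | g B ∈ S}) := by
    rw [Set.disjoint_left]
    rintro - ⟨B, -, rfl⟩ ⟨B', -, hB'⟩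
    have : Fin.last n ∈ g B' := hB' ▸ Set.mem_insert _ _
    obtain ⟨i, -, hi⟩ := this
    exact Fin.castSucc_ne_last i hi
  rw [← Set.ncard_image_of_injective _ hf, ← Set.ncard_image_of_injective _ hg,
    ← Set.ncard_union_eq hdisj, ← hS]

theorem Nat.sum_range_succ_choose_succ (m k : ℕ) :
    ∑ i ∈ Finset.range (k + 1), (m + 1).choose i =
      ∑ i ∈ Finset.range (k + 1), m.choose i + ∑ i ∈ Finset.range k, m.choose i := by
  rw [Finset.sum_range_succ' (fun i ↦ (m + 1).choose i),
    Finset.sum_range_succ' (fun i ↦ m.choose i)]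
  simp only [Nat.choose_succ_succ, Nat.choose_zero_right, Finset.sum_add_distrib]
  ring

section SignSets

variable [LinearOrder 𝕜] {ι V : Type*} [AddCommGroup V] [Module 𝕜 V]

def IsWeakSignSet (c : ι → 𝕜) (A : Set ι) : Prop :=
  ∀ i, (i ∈ A → 0 ≤ c i) ∧ (i ∉ A → c i ≤ 0)

def weakSignSets (ℓ : ι → Dual 𝕜 V) : Set (Set ι) :=
  {A | ∃ v ≠ 0, IsWeakSignSet (fun i ↦ ℓ i v) A}

theorem mem_weakSignSets_dualRestrict {ℓ : ι → Dual 𝕜 V} {W : Submodule 𝕜 V} {A : Set ι} :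
    A ∈ weakSignSets (fun i ↦ W.dualRestrict (ℓ i)) ↔
      ∃ v ∈ W, v ≠ 0 ∧ IsWeakSignSet (fun i ↦ ℓ i v) A := by
  simp [weakSignSets, and_left_comm]

theorem isWeakSignSet_insert_last_image_castSucc {n : ℕ} {c : Fin (n + 1) → 𝕜} {B : Set (Fin n)} :
    IsWeakSignSet c (insert (Fin.last n) (Fin.castSucc '' B)) ↔
      IsWeakSignSet (Fin.init c) B ∧ 0 ≤ c (Fin.last n) := by
  simp [IsWeakSignSet, Fin.forall_fin_succ', Fin.castSucc_ne_last, Fin.init, -Set.mem_image,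
    (Fin.castSucc_injective n).mem_set_image]

theorem isWeakSignSet_image_castSucc {n : ℕ} {c : Fin (n + 1) → 𝕜} {B : Set (Fin n)} :
    IsWeakSignSet c (Fin.castSucc '' B) ↔ IsWeakSignSet (Fin.init c) B ∧ c (Fin.last n) ≤ 0 := by
  have hlast : Fin.last n ∉ Fin.castSucc '' B := fun ⟨i, _, hi⟩ ↦ Fin.castSucc_ne_last i hi
  simp [IsWeakSignSet, Fin.forall_fin_succ', Fin.init, hlast, -Set.mem_image,
    (Fin.castSucc_injective n).mem_set_image]

theorem weakSignSets_eq_empty [Subsingleton V] (ℓ : ι → Dual 𝕜 V) : weakSignSets ℓ = ∅ :=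
  Set.eq_empty_of_forall_notMem fun _ ⟨v, hv, _⟩ ↦ hv (Subsingleton.elim v 0)

theorem weakSignSets_init {n : ℕ} (ℓ : Fin (n + 1) → Dual 𝕜 V) :
    weakSignSets (Fin.init ℓ) = {B | insert (Fin.last n) (Fin.castSucc '' B) ∈ weakSignSets ℓ} ∪
      {B | Fin.castSucc '' B ∈ weakSignSets ℓ} := by
  ext B
  simp only [weakSignSets, Set.mem_union, Set.mem_ofPred_eq,
    isWeakSignSet_insert_last_image_castSucc, isWeakSignSet_image_castSucc]
  constructor
  · rintro ⟨v, hv, hB⟩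
    rcases le_total 0 (ℓ (Fin.last n) v) with h | h
    exacts [Or.inl ⟨v, hv, hB, h⟩, Or.inr ⟨v, hv, hB, h⟩]
  · rintro (⟨v, hv, hB, -⟩ | ⟨v, hv, hB, -⟩) <;> exact ⟨v, hv, hB⟩

variable [IsStrictOrderedRing 𝕜]

namespace IsWeakSignSet

variable {c c' : ι → 𝕜} {A : Set ι}

theorem add (hc : IsWeakSignSet c A) (hc' : IsWeakSignSet c' A) : IsWeakSignSet (c + c') A :=
  fun i ↦ ⟨fun hi ↦ add_nonneg ((hc i).1 hi) ((hc' i).1 hi),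
    fun hi ↦ add_nonpos ((hc i).2 hi) ((hc' i).2 hi)⟩

theorem smul (hc : IsWeakSignSet c A) {r : 𝕜} (hr : 0 ≤ r) : IsWeakSignSet (r • c) A :=
  fun i ↦ ⟨fun hi ↦ mul_nonneg hr ((hc i).1 hi),
    fun hi ↦ mul_nonpos_of_nonneg_of_nonpos hr ((hc i).2 hi)⟩

theorem eq_zero_of_add_eq_zero (hc : IsWeakSignSet c A) (hc' : IsWeakSignSet c' A)
    (h : c + c' = 0) : c = 0 := by
  funext i
  show c i = 0
  have hi : c i + c' i = 0 := congr_fun h i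
  by_cases hiA : i ∈ A
  · exact le_antisymm (by linarith [(hc' i).1 hiA]) ((hc i).1 hiA)
  · exact le_antisymm ((hc i).2 hiA) (by linarith [(hc' i).2 hiA])

end IsWeakSignSet

theorem weakSignSets_eq_univ [Nonempty ι] {ℓ : ι → Dual 𝕜 V} (hℓ : Surjective (LinearMap.pi ℓ)) :
    weakSignSets ℓ = Set.univ := by
  classical
  refine Set.eq_univ_of_forall fun A ↦ ?_
  obtain ⟨v, hv⟩ := hℓ fun i ↦ if i ∈ A then 1 else -1
  have hℓv (i : ι) : ℓ i v = if i ∈ A then 1 else -1 := congr_fun hv i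
  refine ⟨v, ?_, fun i ↦ ?_⟩
  · rintro rfl
    obtain ⟨i⟩ := ‹Nonempty ι›
    have := hℓv i
    split_ifs at this <;> simp at this
  · by_cases hi : i ∈ A <;> simp [hℓv, hi]

theorem weakSignSets_dualRestrict_ker_last {n : ℕ} (ℓ : Fin (n + 1) → Dual 𝕜 V)
    (hinit : Injective (LinearMap.pi (Fin.init ℓ))) :
    weakSignSets (fun i ↦ (LinearMap.ker (ℓ (Fin.last n))).dualRestrict (Fin.init ℓ i)) =
      {B | insert (Fin.last n) (Fin.castSucc '' B) ∈ weakSignSets ℓ} ∩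
        {B | Fin.castSucc '' B ∈ weakSignSets ℓ} := by
  ext B
  rw [mem_weakSignSets_dualRestrict]
  simp only [weakSignSets, Set.mem_inter_iff, Set.mem_ofPred_eq,
    isWeakSignSet_insert_last_image_castSucc, isWeakSignSet_image_castSucc, LinearMap.mem_ker]
  constructor
  · rintro ⟨v, hvH, hv, hB⟩
    exact ⟨⟨v, hv, hB, hvH.ge⟩, ⟨v, hv, hB, hvH.le⟩⟩
  rintro ⟨⟨v, hv, hBv, hv_nonneg⟩, ⟨w, hw, hBw, hw_nonpos⟩⟩
  rcases hv_nonneg.eq_or_lt with hv_zero | hv_pos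
  · exact ⟨v, hv_zero.symm, hv, hBv⟩
  -- a positive combination of `v` and `w` lies on the hyperplane `ℓ (last n) = 0`
  set p := ℓ (Fin.last n) v
  set q := -ℓ (Fin.last n) w
  have hq : 0 ≤ q := neg_nonneg.mpr hw_nonpos
  have hcomb : Fin.init (fun i ↦ ℓ i (q • v + p • w)) =
      q • Fin.init (fun i ↦ ℓ i v) + p • Fin.init (fun i ↦ ℓ i w) := by
    ext i; simp [Fin.init]
  refine ⟨q • v + p • w, by simp only [map_add, map_smul, smul_eq_mul, p, q]; ring,
    fun h0 ↦ hw ?_, ?_⟩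
  · have hpw := (hBw.smul hv_pos.le).eq_zero_of_add_eq_zero (hBv.smul hq)
      (by rw [add_comm, ← hcomb, h0]; ext; simp [Fin.init])
    have hw0 := (smul_eq_zero.mp hpw).resolve_left hv_pos.ne'
    apply hinit
    ext i
    simpa [Fin.init] using congr_fun hw0 i
  · change IsWeakSignSet (Fin.init fun i ↦ ℓ i (q • v + p • w)) B
    rw [hcomb]
    exact (hBv.smul hq).add (hBw.smul hv_pos.le)

theorem ncard_weakSignSets [FiniteDimensional 𝕜 V] {n : ℕ} (ℓ : Fin n → Dual 𝕜 V)
    (hℓ : LinearGeneralPosition 𝕜 ℓ) (hn : finrank 𝕜 V ≤ n) :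
    (weakSignSets ℓ).ncard = 2 * ∑ i ∈ Finset.range (finrank 𝕜 V), (n - 1).choose i := by
  induction n generalizing V with
  | zero =>
    have : Subsingleton V := finrank_zero_iff.mp (Nat.le_zero.mp hn)
    simp [weakSignSets_eq_empty, Nat.le_zero.mp hn]
  | succ n ih =>
  rcases (finrank 𝕜 V).eq_zero_or_pos with hV | hV
  · have : Subsingleton V := finrank_zero_iff.mp hV
    simp [weakSignSets_eq_empty, hV]
  rcases hn.eq_or_lt with hn | hn
  · have hsurj : Surjective (LinearMap.pi ℓ) :=
      (LinearMap.injective_iff_surjective_of_finrank_eq_finrank (by simp [hn])).mp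
        (hℓ.injective_pi (by simp [hn]))
    rw [weakSignSets_eq_univ hsurj, Set.ncard_univ, Nat.card_eq_fintype_card, Fintype.card_set,
      Fintype.card_fin, hn, Nat.add_sub_cancel, Nat.sum_range_choose, pow_succ']
  set H := LinearMap.ker (ℓ (Fin.last n))
  have hH : finrank 𝕜 H + 1 = finrank 𝕜 V :=
    (ℓ (Fin.last n)).finrank_ker_add_one_of_ne_zero (hℓ.ne_zero (by simpa using hV) _)
  have hinit : LinearGeneralPosition 𝕜 (Fin.init ℓ) := hℓ.comp_injective (Fin.castSucc_injective n)
  have hdel := ih (Fin.init ℓ) hinit (by omega)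
  have hres := ih (fun i ↦ H.dualRestrict (Fin.init ℓ i))
    (hℓ.dualRestrict_ker hV (Fin.castSucc_injective n) (by simp)) (by omega)
  rw [weakSignSets_init] at hdel
  rw [weakSignSets_dualRestrict_ker_last ℓ
    (hinit.injective_pi (by rw [Fintype.card_fin]; omega))] at hres
  obtain ⟨k, hk⟩ : ∃ k, finrank 𝕜 V = k + 1 := ⟨_, (Nat.succ_pred_eq_of_pos hV).symm⟩
  obtain ⟨m, rfl⟩ : ∃ m, n = m + 1 := ⟨_, (Nat.succ_pred_eq_of_pos (by omega)).symm⟩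
  rw [Set.ncard_eq_add_of_fin_succ, ← Set.ncard_union_add_ncard_inter, hdel, hres, hk,
    show finrank 𝕜 H = k by omega]
  simp only [Nat.add_sub_cancel, Nat.sum_range_succ_choose_succ]
  ring

end SignSets

section Radon

variable [LinearOrder 𝕜] [IsStrictOrderedRing 𝕜] {ι E : Type*} [Fintype ι] [AddCommGroup E]
  [Module 𝕜 E] {x : ι → E} {A : Set ι}

theorem mem_convexHull_image_iff {p : E} :
    p ∈ convexHull 𝕜 (x '' A) ↔ ∃ w : ι → 𝕜, (∀ i, 0 ≤ w i) ∧ (∀ i ∉ A, w i = 0) ∧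
      ∑ i, w i = 1 ∧ ∑ i, w i • x i = p := by
  classical
  constructor
  · refine fun hp ↦ convexHull_min (t := {q | ∃ w : ι → 𝕜, (∀ i, 0 ≤ w i) ∧ (∀ i ∉ A, w i = 0) ∧
      ∑ i, w i = 1 ∧ ∑ i, w i • x i = q}) ?_ ?_ hp
    · rintro - ⟨i, hi, rfl⟩
      refine ⟨Pi.single i 1, fun j ↦ ?_, fun j hj ↦ ?_, by simp, by simp [Pi.single_apply]⟩
      · by_cases h : j = i <;> simp [h]
      · simp [show j ≠ i by rintro rfl; exact hj hi]
    · rintro - ⟨w, hw0, hwA, hw1, rfl⟩ - ⟨w', hw0', hwA', hw1', rfl⟩ a b ha hb hab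
      refine ⟨a • w + b • w', fun i ↦ ?_, fun i hi ↦ ?_, ?_, ?_⟩
      · simp only [Pi.add_apply, Pi.smul_apply, smul_eq_mul]
        exact add_nonneg (mul_nonneg ha (hw0 i)) (mul_nonneg hb (hw0' i))
      · simp [hwA i hi, hwA' i hi]
      · simp [Finset.sum_add_distrib, ← Finset.mul_sum, hw1, hw1', hab]
      · simp [add_smul, mul_smul, Finset.sum_add_distrib, ← Finset.smul_sum]
  · rintro ⟨w, hw0, hwA, hw1, rfl⟩
    have hA {i : ι} (hi : w i ≠ 0) : i ∈ A := by_contra fun h ↦ hi (hwA i h)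
    rw [← Finset.sum_filter_of_ne (p := (· ∈ A)) fun i _ hi ↦ hA (left_ne_zero_of_smul hi)]
    refine (convex_convexHull 𝕜 _).sum_mem (fun i _ ↦ hw0 i) ?_
      fun i hi ↦ subset_convexHull 𝕜 _ ⟨i, (Finset.mem_filter.mp hi).2, rfl⟩
    rwa [Finset.sum_filter_of_ne fun i _ hi ↦ hA hi]

theorem exists_isWeakSignSet_of_convexHull_inter_nonempty
    (h : (convexHull 𝕜 (x '' A) ∩ convexHull 𝕜 (x '' Aᶜ)).Nonempty) :
    ∃ c : ι → 𝕜, c ≠ 0 ∧ ∑ i, c i • x i = 0 ∧ ∑ i, c i = 0 ∧ IsWeakSignSet c A := by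
  obtain ⟨p, hpA, hpB⟩ := h
  obtain ⟨a, ha0, haA, ha1, rfl⟩ := mem_convexHull_image_iff.mp hpA
  obtain ⟨b, hb0, hbA, hb1, hab⟩ := mem_convexHull_image_iff.mp hpB
  have hb {i : ι} (hi : i ∈ A) : b i = 0 := hbA i (not_not_intro hi)
  refine ⟨a - b, fun h ↦ ?_, by simp [sub_smul, hab], by simp [ha1, hb1],
    fun i ↦ ⟨fun hi ↦ by simp [hb hi, ha0 i], fun hi ↦ by simp [haA i hi, hb0 i]⟩⟩
  have ha : a = 0 := funext fun i ↦ by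
    by_cases hi : i ∈ A
    · simpa [hb hi] using congr_fun h i
    · exact haA i hi
  simp [ha] at ha1

theorem convexHull_inter_nonempty_of_isWeakSignSet {c : ι → 𝕜} (hc : c ≠ 0)
    (hcx : ∑ i, c i • x i = 0) (hc1 : ∑ i, c i = 0) (hcA : IsWeakSignSet c A) :
    (convexHull 𝕜 (x '' A) ∩ convexHull 𝕜 (x '' Aᶜ)).Nonempty := by
  classical
  set a : ι → 𝕜 := fun i ↦ if i ∈ A then c i else 0
  set b : ι → 𝕜 := fun i ↦ if i ∈ A then 0 else -c i
  have ha0 (i : ι) : 0 ≤ a i := by by_cases hi : i ∈ A <;> simp [a, hi, (hcA i).1]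
  have hb0 (i : ι) : 0 ≤ b i := by by_cases hi : i ∈ A <;> simp [b, hi, (hcA i).2]
  have hab : a - b = c := funext fun i ↦ by by_cases hi : i ∈ A <;> simp [a, b, hi]
  set S := ∑ i, a i
  have hbS : ∑ i, b i = S :=
    (sub_eq_zero.mp (by simpa [← hab, Finset.sum_sub_distrib] using hc1)).symm
  have hbx : ∑ i, b i • x i = ∑ i, a i • x i :=
    (sub_eq_zero.mp (by simpa [← hab, sub_smul, Finset.sum_sub_distrib] using hcx)).symm
  have hS : 0 < S := by
    refine (Finset.sum_nonneg fun i _ ↦ ha0 i).lt_of_ne fun hS ↦ hc ?_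
    have ha : a = 0 := funext fun i ↦
      (Finset.sum_eq_zero_iff_of_nonneg fun i _ ↦ ha0 i).mp hS.symm i (Finset.mem_univ i)
    have hb : b = 0 := funext fun i ↦
      (Finset.sum_eq_zero_iff_of_nonneg fun i _ ↦ hb0 i).mp (hbS.trans hS.symm) i
        (Finset.mem_univ i)
    rw [← hab, ha, hb, sub_zero]
  have hmem {w : ι → 𝕜} {B : Set ι} (hw0 : ∀ i, 0 ≤ w i) (hwB : ∀ i ∉ B, w i = 0)
      (hwS : ∑ i, w i = S) : S⁻¹ • ∑ i, w i • x i ∈ convexHull 𝕜 (x '' B) :=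
    mem_convexHull_image_iff.mpr ⟨S⁻¹ • w, fun i ↦ mul_nonneg (inv_nonneg.mpr hS.le) (hw0 i),
      fun i hi ↦ by simp [hwB i hi], by simp [← Finset.mul_sum, hwS, hS.ne'],
      by simp [mul_smul, Finset.smul_sum]⟩
  refine ⟨S⁻¹ • ∑ i, a i • x i, hmem ha0 (fun i hi ↦ by simp [a, hi]) rfl, ?_⟩
  rw [← hbx]
  exact hmem hb0 (fun i hi ↦ by simp_all [b]) hbS

theorem convexHull_inter_nonempty_iff :
    (convexHull 𝕜 (x '' A) ∩ convexHull 𝕜 (x '' Aᶜ)).Nonempty ↔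
      ∃ c : ι → 𝕜, ∑ i, c i • (x i, (1 : 𝕜)) = 0 ∧ c ≠ 0 ∧ IsWeakSignSet c A := by
  have hlift (c : ι → 𝕜) : ∑ i, c i • (x i, (1 : 𝕜)) = 0 ↔ ∑ i, c i • x i = 0 ∧ ∑ i, c i = 0 := by
    simp [Prod.ext_iff, Prod.fst_sum, Prod.snd_sum]
  simp only [hlift]
  exact ⟨fun h ↦ let ⟨c, hc, hcx, hc1, hcA⟩ := exists_isWeakSignSet_of_convexHull_inter_nonempty h
      ⟨c, ⟨hcx, hc1⟩, hc, hcA⟩,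
    fun ⟨_, ⟨hcx, hc1⟩, hc, hcA⟩ ↦ convexHull_inter_nonempty_of_isWeakSignSet hc hcx hc1 hcA⟩

end Radon

theorem Set.two_mul_ncard_setOf_pair_compl {α : Type*} [Finite α] (a : α) {S : Set (Set α)}
    (hS : ∀ A ∈ S, Aᶜ ∈ S) :
    2 * {p : Set (Set α) | ∃ A, p = {A, Aᶜ} ∧ A ∈ S}.ncard = S.ncard := by
  set S₀ := {A ∈ S | a ∈ A}
  have hpairs : {p : Set (Set α) | ∃ A, p = {A, Aᶜ} ∧ A ∈ S} = (fun A ↦ {A, Aᶜ}) '' S₀ := by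
    ext p
    constructor
    · rintro ⟨A, rfl, hA⟩
      by_cases ha : a ∈ A
      · exact ⟨A, ⟨hA, ha⟩, rfl⟩
      · exact ⟨Aᶜ, ⟨hS A hA, ha⟩, by simp only [compl_compl]; exact Set.pair_comm _ _⟩
    · rintro ⟨A, ⟨hA, -⟩, rfl⟩
      exact ⟨A, rfl, hA⟩
  have hinj : Set.InjOn (fun A ↦ ({A, Aᶜ} : Set (Set α))) S₀ := by
    rintro A ⟨-, hA⟩ B ⟨-, hB⟩ (h : ({A, Aᶜ} : Set (Set α)) = {B, Bᶜ})
    rcases (h ▸ Set.mem_insert A _ : A ∈ ({B, Bᶜ} : Set (Set α))) with rfl | rfl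
    · rfl
    · exact absurd hB hA
  have hsplit : S = S₀ ∪ compl '' S₀ := by
    ext A
    constructor
    · intro hA
      by_cases ha : a ∈ A
      · exact Or.inl ⟨hA, ha⟩
      · exact Or.inr ⟨Aᶜ, ⟨hS A hA, ha⟩, compl_compl A⟩
    · rintro (⟨hA, -⟩ | ⟨B, ⟨hB, -⟩, rfl⟩)
      exacts [hA, hS B hB]
  have hdisj : Disjoint S₀ (compl '' S₀) := by
    rw [Set.disjoint_left]
    rintro A ⟨-, hA⟩ ⟨B, ⟨-, hB⟩, rfl⟩
    exact hA hB
  rw [hpairs, hinj.ncard_image, hsplit, Set.ncard_union_eq hdisj,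
    Set.ncard_image_of_injective _ compl_injective, two_mul]

theorem Nat.sum_range_sub_choose_eq_sum_Icc (m d : ℕ) :
    ∑ i ∈ Finset.range (m - d), m.choose i = ∑ i ∈ Finset.Icc (d + 1) m, m.choose i := by
  refine Finset.sum_nbij' (m - ·) (m - ·) ?_ ?_ ?_ ?_ ?_ <;>
    intro i hi <;> simp only [Finset.mem_range, Finset.mem_Icc] at hi ⊢ <;>
    first | omega | exact (Nat.choose_symm (by omega)).symm

theorem count_radon_partitions (d n : ℕ) (hn : d + 2 ≤ n)
    (x : Fin n → EuclideanSpace ℝ (Fin d))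
    (hgen : ∀ s : Finset (Fin n), s.card = d + 1 →
      AffineIndependent ℝ (fun i : s => x i)) :
    {p : Set (Set (Fin n)) | ∃ A : Set (Fin n), p = {A, Aᶜ} ∧
      (convexHull ℝ (x '' A) ∩ convexHull ℝ (x '' Aᶜ)).Nonempty}.ncard
      = ∑ i ∈ Finset.Icc (d + 1) (n - 1), (n - 1).choose i := by
  set y : Fin n → EuclideanSpace ℝ (Fin d) × ℝ := fun i ↦ (x i, 1)
  have hdimE : finrank ℝ (EuclideanSpace ℝ (Fin d) × ℝ) = d + 1 := by
    rw [finrank_prod, finrank_euclideanSpace_fin, finrank_self]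
  have hcard : finrank ℝ (EuclideanSpace ℝ (Fin d) × ℝ) ≤ Fintype.card (Fin n) := by
    rw [hdimE, Fintype.card_fin]; omega
  have hy : LinearGeneralPosition ℝ y := linearGeneralPosition_prod_one
    (by rw [finrank_euclideanSpace_fin, Fintype.card_fin]; omega)
    (by rwa [finrank_euclideanSpace_fin])
  have hdim := hy.finrank_ker_linearCombination_add hcard
  set K := LinearMap.ker (Fintype.linearCombination ℝ y)
  have hK : finrank ℝ K = n - 1 - d := by
    rw [hdimE, Fintype.card_fin] at hdim
    omega
  have hradon : {A : Set (Fin n) | (convexHull ℝ (x '' A) ∩ convexHull ℝ (x '' Aᶜ)).Nonempty} =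
      weakSignSets (fun i ↦ K.dualRestrict (LinearMap.proj i)) := by
    ext A
    rw [Set.mem_ofPred_eq, convexHull_inter_nonempty_iff, mem_weakSignSets_dualRestrict]
    simp only [K, y, LinearMap.mem_ker, Fintype.linearCombination_apply, LinearMap.proj_apply]
  have hcount := ncard_weakSignSets _ (hy.dualRestrict_ker_linearCombination hcard)
    (hK.trans_le (by omega))
  rw [← hradon, hK] at hcount
  have hhalf := Set.two_mul_ncard_setOf_pair_compl (⟨0, by omega⟩ : Fin n)
    (S := {A : Set (Fin n) | (convexHull ℝ (x '' A) ∩ convexHull ℝ (x '' Aᶜ)).Nonempty})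
    fun A hA ↦ by simpa [Set.inter_comm] using hA
  rw [← Nat.sum_range_sub_choose_eq_sum_Icc]
  simp only [Set.mem_ofPred_eq] at hhalf
  omega
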